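/- If (X, ‖·‖) is a homogeneously weighted space possessing a concave corner ŷ, then the CSB inequality fails for ⟨·|·⟩♠: for small δ > 0, the unit vectors u = δ·sign(x̄) + (1 + δ·m₊)·sign(ŷ) and v = −δ·sign(x̄) + (1 − δ·m₋)·sign(ŷ) satisfy ⟨u|v⟩♠ = 1 + δ·(m₊ − m₋) + (δ²/4)·K > 1 = ‖u‖·‖v‖, where K = (m₊ − m₋)² − ‖2·sign(x̄) + (m₊ + m₋)·sign(ŷ)‖². -/
import Mathlib


theorem stmt_19 {X : Type*} [AddCommGroup X] [Module ℝ X]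
    (N : X → ℝ) (hnn : ∀ v, 0 ≤ N v)
    (hom : ∀ (r : ℝ) (v : X), N (r • v) = |r| * N v)
    (yh xb : X) (hyh : 0 < N yh) (hxb : 0 < N xb)
    (ε mm mp : ℝ) (hε : 0 < ε) (hmm : mm < mp)
    (hcorner : ∀ δ : ℝ, 0 ≤ δ → δ ≤ ε →
      N (δ • ((N xb)⁻¹ • xb) + (1 + δ * mp) • ((N yh)⁻¹ • yh)) = 1 ∧
      N (-(δ • ((N xb)⁻¹ • xb)) + (1 - δ * mm) • ((N yh)⁻¹ • yh)) = 1)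
    (sp : X → X → ℝ)
    (hsp : ∀ x y, N x * N y ≠ 0 → sp x y =
      (1/4) * N x * N y *
        ((N ((N x)⁻¹ • x + (N y)⁻¹ • y)) ^ 2 - (N ((N x)⁻¹ • x - (N y)⁻¹ • y)) ^ 2)) :
    ∃ δ : ℝ, 0 < δ ∧ δ ≤ ε ∧
      (let u := δ • ((N xb)⁻¹ • xb) + (1 + δ * mp) • ((N yh)⁻¹ • yh)
       let v := -(δ • ((N xb)⁻¹ • xb)) + (1 - δ * mm) • ((N yh)⁻¹ • yh)
       let K := (mp - mm) ^ 2 - (N ((2 : ℝ) • ((N xb)⁻¹ • xb) + (mp + mm) • ((N yh)⁻¹ • yh))) ^ 2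
       N u * N v = 1 ∧
       sp u v = 1 + δ * (mp - mm) + δ ^ 2 / 4 * K ∧
       1 < sp u v) := by
  have hNsy : N ((N yh)⁻¹ • yh) = 1 := by
    rw [hom, abs_inv, abs_of_pos hyh, inv_mul_cancel₀ hyh.ne']
  set sx : X := (N xb)⁻¹ • xb with hsxdef
  set sy : X := (N yh)⁻¹ • yh with hsydef
  set d : ℝ := mp - mm with hd
  have hdpos : 0 < d := sub_pos.mpr hmm
  set C : ℝ := N ((2 : ℝ) • sx + (mp + mm) • sy) with hC
  set K : ℝ := d ^ 2 - C ^ 2 with hK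
  set δ : ℝ := min ε (d / (|K| + 1)) with hδdef
  have hδpos : 0 < δ := lt_min hε (div_pos hdpos (by positivity))
  have hδε : δ ≤ ε := min_le_left _ _
  obtain ⟨hu, hv⟩ := hcorner δ hδpos.le hδε
  refine ⟨δ, hδpos, hδε, ?_⟩
  set u : X := δ • sx + (1 + δ * mp) • sy with hudef
  set v : X := -(δ • sx) + (1 - δ * mm) • sy with hvdef
  have huv : N u * N v = 1 := by rw [hu, hv]; ring
  have hsum : u + v = (2 + δ * d) • sy := by
    rw [hudef, hvdef, hd]; module
  have hdiff : u - v = δ • ((2 : ℝ) • sx + (mp + mm) • sy) := by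
    rw [hudef, hvdef]; module
  have hNsum : N (u + v) = 2 + δ * d := by
    rw [hsum, hom, hNsy, mul_one, abs_of_pos (by positivity)]
  have hNdiff : N (u - v) = δ * C := by
    rw [hdiff, hom, abs_of_pos hδpos, hC]
  have hspuv : sp u v = 1 + δ * d + δ ^ 2 / 4 * K := by
    rw [hsp u v (by rw [huv]; norm_num), hu, hv]
    simp only [inv_one, one_smul, mul_one]
    rw [hNsum, hNdiff, hK]
    ring
  have hδK : δ * |K| ≤ d := by
    have h1 : δ ≤ d / (|K| + 1) := min_le_right _ _
    rw [le_div_iff₀ (by positivity : (0:ℝ) < |K| + 1)] at h1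
    nlinarith [abs_nonneg K, hδpos.le]
  have hlt : 1 < sp u v := by
    rw [hspuv]
    nlinarith [neg_abs_le K, hδpos, hdpos, sq_nonneg δ]
  exact ⟨huv, hspuv, hlt⟩
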